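/- arXiv:0806.0433 — 3 statements merged into one kernel-verified Lean document; each statement's English description precedes it below -/
import Mathlib

section
/- For any permutation σ of [n] with circular descent set S having maximum element j, one has σ(k) = k for all k with j+1 ≤ k ≤ n. -/
/-- `i` (0-based position) is a circular descent position of `σ`. -/
def isCDesB {n : ℕ} (σ : Equiv.Perm (Fin n)) (i : Fin n) : Bool :=
  if h : (i : ℕ) + 1 < n then decide (σ ⟨(i : ℕ) + 1, h⟩ < σ i) else false

/-- The circular descent set of `σ`, as a set of 1-based values in `[2,n]`. -/
def cdesSet (n : ℕ) (σ : Equiv.Perm (Fin n)) : Finset ℕ :=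
  (Finset.univ.filter (fun i => isCDesB σ i = true)).image (fun i => (σ i : ℕ) + 1)

/-- The number of permutations of `[n]` with circular descent set `S`. -/
def cdes (n : ℕ) (S : Finset ℕ) : ℕ :=
  (Finset.univ.filter (fun σ : Equiv.Perm (Fin n) => cdesSet n σ = S)).card

/-
Going down from the top value, suppose `σ` fixes every value above `k ≥ j`. Then `σ` maps
`{0, …, k}` onto itself, so `k` sits at some position `i ≤ k`. If `i < k`, the next entry
`σ (i + 1)` is again at most `k` and differs from `k`, so `i` is a circular descent with top
`k + 1 > j`, contradicting the maximality of `j`. Hence `σ k = k`.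
-/

open Equiv

namespace Equiv.Perm

section LinearOrder

variable {α : Type*} [LinearOrder α] {σ : Perm α} {k : α}

theorem apply_le_of_forall_gt_apply_eq
    (habove : ∀ l, k < l → σ l = l) {i : α} (hi : i ≤ k) : σ i ≤ k := by
  by_contra! hlt
  have hfix : σ (σ i) = σ i := habove _ hlt
  exact absurd (σ.injective hfix ▸ hlt) (not_lt.2 hi)

theorem symm_apply_le_of_forall_gt_apply_eq (habove : ∀ l, k < l → σ l = l) : σ.symm k ≤ k :=
  apply_le_of_forall_gt_apply_eq (σ := σ.symm)
    (fun l hl => σ.symm_apply_eq.2 (habove l hl).symm) le_rfl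

end LinearOrder

theorem apply_eq_self_of_le_of_forall_descent_lt {n m : ℕ} (σ : Perm (Fin n))
    (hdes : ∀ (i : Fin n) (h : (i : ℕ) + 1 < n), σ ⟨i + 1, h⟩ < σ i → (σ i : ℕ) < m)
    (k : Fin n) (hk : m ≤ k) : σ k = k := by
  induction k using WellFoundedGT.induction with
  | _ k ih =>
  have habove : ∀ l, k < l → σ l = l := fun l hl =>
    ih l hl (hk.trans (Fin.lt_def.1 hl).le)
  have hik : σ (σ.symm k) = k := σ.apply_symm_apply k
  rcases (symm_apply_le_of_forall_gt_apply_eq habove).lt_or_eq with hlt | heq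
  · set i := σ.symm k
    have hi1 : (i : ℕ) + 1 < n := Nat.lt_of_le_of_lt (Fin.lt_def.1 hlt) k.isLt
    have hnext_le : σ ⟨i + 1, hi1⟩ ≤ k :=
      apply_le_of_forall_gt_apply_eq habove (Fin.le_def.2 (Fin.lt_def.1 hlt))
    have hnext_ne : σ ⟨i + 1, hi1⟩ ≠ k := by
      rw [← hik, σ.injective.ne_iff, ne_eq, Fin.ext_iff]
      exact Nat.succ_ne_self _
    have hdesc : σ ⟨i + 1, hi1⟩ < σ i := hik ▸ lt_of_le_of_ne hnext_le hnext_ne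
    exact absurd (hik ▸ hdes i hi1 hdesc) (not_lt.2 hk)
  · rwa [heq] at hik

end Equiv.Perm

theorem mem_cdesSet {n : ℕ} (σ : Perm (Fin n)) (i : Fin n) (h : (i : ℕ) + 1 < n)
    (hd : σ ⟨(i : ℕ) + 1, h⟩ < σ i) : (σ i : ℕ) + 1 ∈ cdesSet n σ :=
  Finset.mem_image.2 ⟨i, Finset.mem_filter.2 ⟨Finset.mem_univ _, by simp [isCDesB, h, hd]⟩, rfl⟩

theorem stmt_6 (n : ℕ) (σ : Equiv.Perm (Fin n)) (hne : (cdesSet n σ).Nonempty)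
    (j : ℕ) (hj : (cdesSet n σ).max' hne = j) :
    ∀ k : Fin n, j + 1 ≤ (k : ℕ) + 1 → σ k = k := by
  intro k hk
  refine σ.apply_eq_self_of_le_of_forall_descent_lt (m := j) (fun i h hd => ?_) k (by omega)
  have := hj ▸ Finset.le_max' _ _ (mem_cdesSet σ i h hd)
  omega
end

section
/- Let n ≥ 2 and S = {s_1 > s_2 > ... > s_k} ⊆ [2,n] with k = |S| ≥ 1. Set d_i = s_i - s_{i+1} for i ∈ [k-1] and d_k = s_k - 1. Then cdes_n(S) = Σ over (x_1,...,x_k) ∈ {0,1}^k of (-1)^{k - Σ_j x_j} · Π_{i=1}^{k} (1 + x_1 + ... + x_i)^{d_i}. -/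
/-!
By inclusion–exclusion over the subsets of `S`, `cdes n S = ∑_{T ⊆ S} (-1)^{|S \ T|} N(T)`,
where `N(T)` counts the permutations whose descent tops all lie in `T`. Every permutation of
`[n+1]` arises in exactly one way by inserting the value `1` into a permutation of `{2, …, n+1}`,
and its descent tops are the old ones together with the entry just before `1` (if any). So `1`
may go in front or right after an entry of `T`, and `N(T) = ∏_{m=1}^{n} (1 + #{t ∈ T | m < t})`.
For `T = {s_i | x_i = 1}` the factor is `1 + x_1 + ⋯ + x_i` for `s_{i+1} ≤ m < s_i` (with
`s_{k+1} = 1`) and `1` for `m ≥ s_1`, which gives the product of powers.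
-/

open Finset

namespace Finset

theorem sum_powerset_neg_one_pow_card_sdiff_mul_sum_powerset {α R : Type*} [DecidableEq α]
    [CommRing R] (S : Finset α) (f : Finset α → R) :
    ∑ T ∈ S.powerset, (-1) ^ #(S \ T) * ∑ U ∈ T.powerset, f U = f S := by
  induction S using Finset.induction_on generalizing f with
  | empty => simp
  | insert a S ha ih =>
    have step : ∀ T ∈ S.powerset,
        (-1 : R) ^ #(insert a S \ T) * ∑ U ∈ T.powerset, f U
          + (-1) ^ #(insert a S \ insert a T) * ∑ U ∈ (insert a T).powerset, f U
          = (-1) ^ #(S \ T) * ∑ U ∈ T.powerset, f (insert a U) := by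
      intro T hT
      have haT : a ∉ T := fun h => ha (mem_powerset.1 hT h)
      rw [insert_sdiff_insert, sdiff_insert_of_notMem ha, sum_powerset_insert haT,
        insert_sdiff_of_notMem _ haT, card_insert_of_notMem (by simp [ha])]
      ring
    rw [sum_powerset_insert ha, ← sum_add_distrib, sum_congr rfl step, ih]

theorem prod_range_prod_Ico_of_antitone {M : Type*} [CommMonoid M] (f : ℕ → M) {g : ℕ → ℕ}
    (hg : Antitone g) (k : ℕ) :
    ∏ i ∈ range k, ∏ m ∈ Ico (g (i + 1)) (g i), f m = ∏ m ∈ Ico (g k) (g 0), f m := by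
  induction k with
  | zero => simp
  | succ k ih =>
    rw [prod_range_succ, ih, mul_comm, prod_Ico_consecutive _ (hg k.le_succ) (hg k.zero_le)]

theorem sum_powerset_image_eq_sum_fun_fin_two {ι α β : Type*} [Fintype ι] [DecidableEq ι]
    [DecidableEq α] [AddCommMonoid β] {s : ι → α} (hs : Function.Injective s)
    (F : Finset α → β) :
    ∑ T ∈ (univ.image s).powerset, F T =
      ∑ x : ι → Fin 2, F (({j | x j = 1} : Finset ι).image s) := by
  symm
  refine sum_nbij' (fun x => ({j | x j = 1} : Finset ι).image s)
    (fun T i => if s i ∈ T then 1 else 0) (fun x _ => ?_) (fun _ _ => mem_univ _)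
    (fun x _ => ?_) (fun T hT => ?_) (fun _ _ => rfl)
  · exact mem_powerset.2 (image_subset_image (filter_subset _ _))
  · funext i
    have hx := (x i).isLt
    simp only [mem_image, mem_filter, mem_univ, true_and, hs.eq_iff, exists_eq_right]
    split_ifs with h <;> omega
  · ext t
    simp only [mem_image, mem_filter, mem_univ, true_and, ite_eq_left_iff, zero_ne_one,
      imp_false, not_not]
    refine ⟨fun ⟨j, hj, hjt⟩ => hjt ▸ hj, fun ht => ?_⟩
    obtain ⟨j, -, rfl⟩ := mem_image.1 (mem_powerset.1 hT ht)
    exact ⟨j, ht, rfl⟩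

end Finset

lemma Fin.val_succAbove {n : ℕ} (p : Fin (n + 1)) (j : Fin n) :
    (p.succAbove j : ℕ) = if (j : ℕ) < p then (j : ℕ) else (j : ℕ) + 1 := by
  rcases lt_or_ge (j : ℕ) p with h | h
  · rw [Fin.succAbove_of_castSucc_lt _ _ (by simpa [Fin.lt_def] using h), if_pos h]
    rfl
  · rw [Fin.succAbove_of_le_castSucc _ _ (by simpa [Fin.le_def] using h), if_neg (by omega)]
    rfl

lemma Fin.val_eq_ite_eq_one (y : Fin 2) : (y : ℕ) = if y = 1 then 1 else 0 := by
  fin_cases y <;> rfl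

namespace Equiv.Perm

variable {n : ℕ}

def insertZeroAt (p : Fin (n + 1)) (σ : Perm (Fin n)) : Perm (Fin (n + 1)) :=
  (finSuccEquiv' p).trans (σ.optionCongr.trans (finSuccEquiv' 0).symm)

@[simp]
lemma insertZeroAt_apply_self (p : Fin (n + 1)) (σ : Perm (Fin n)) : insertZeroAt p σ p = 0 := by
  simp [insertZeroAt]

@[simp]
lemma insertZeroAt_apply_succAbove (p : Fin (n + 1)) (σ : Perm (Fin n)) (j : Fin n) :
    insertZeroAt p σ (p.succAbove j) = (σ j).succ := by
  simp [insertZeroAt]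

lemma insertZeroAt_injective :
    Function.Injective fun x : Fin (n + 1) × Perm (Fin n) => insertZeroAt x.1 x.2 := by
  rintro ⟨p, σ⟩ ⟨q, τ⟩ h
  replace h : insertZeroAt p σ = insertZeroAt q τ := h
  obtain rfl : p = q := by
    by_contra hne
    obtain ⟨j, hj⟩ := Fin.exists_succAbove_eq (Ne.symm hne)
    have := DFunLike.congr_fun h q
    rw [insertZeroAt_apply_self, ← hj, insertZeroAt_apply_succAbove] at this
    exact Fin.succ_ne_zero _ this
  obtain rfl : σ = τ := Equiv.ext fun j => by
    simpa using DFunLike.congr_fun h (p.succAbove j)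
  rfl

noncomputable def insertZeroAtEquiv : Fin (n + 1) × Perm (Fin n) ≃ Perm (Fin (n + 1)) :=
  Equiv.ofBijective _ <| (Fintype.bijective_iff_injective_and_card _).2
    ⟨insertZeroAt_injective, by simp [Fintype.card_perm, Nat.factorial_succ]⟩

end Equiv.Perm

open Equiv Perm

lemma isCDesB_iff {n : ℕ} {σ : Perm (Fin n)} {i : Fin n} :
    isCDesB σ i = true ↔ ∃ h : (i : ℕ) + 1 < n, σ ⟨i + 1, h⟩ < σ i := by
  unfold isCDesB
  split_ifs with h <;> simp [h]

lemma isCDesB_insertZeroAt_self {n : ℕ} (p : Fin (n + 1)) (σ : Perm (Fin n)) :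
    isCDesB (insertZeroAt p σ) p = false := by
  rw [Bool.eq_false_iff, Ne, isCDesB_iff]
  rintro ⟨_, h⟩
  simp at h

lemma isCDesB_insertZeroAt_succAbove {n : ℕ} (p : Fin (n + 1)) (σ : Perm (Fin n)) (j : Fin n) :
    isCDesB (insertZeroAt p σ) (p.succAbove j) = true ↔ p = j.succ ∨ isCDesB σ j = true := by
  have hval := Fin.val_succAbove p j
  have hp := p.isLt
  rw [isCDesB_iff, isCDesB_iff]
  by_cases hpj : p = j.succ
  · subst hpj
    rw [if_pos (by simp)] at hval
    refine iff_of_true ⟨by omega, ?_⟩ (Or.inl rfl)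
    have : (⟨(j.succ.succAbove j : ℕ) + 1, by omega⟩ : Fin (n + 1)) = j.succ := by
      ext; simp only [hval, Fin.val_succ]
    rw [this, insertZeroAt_apply_self, insertZeroAt_apply_succAbove]
    exact Fin.succ_pos _
  · have hpj' : (p : ℕ) ≠ j + 1 := fun h => hpj (Fin.ext h)
    have hlen : (p.succAbove j : ℕ) + 1 < n + 1 ↔ (j : ℕ) + 1 < n := by
      split_ifs at hval <;> omega
    have hnext : ∀ h hj,
        (⟨(p.succAbove j : ℕ) + 1, h⟩ : Fin (n + 1)) = p.succAbove ⟨j + 1, hj⟩ :=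
      fun _ _ => by ext; simp only [Fin.val_succAbove]; split_ifs at hval ⊢ <;> omega
    simp only [hpj, false_or]
    refine ⟨fun ⟨h, hlt⟩ => ⟨hlen.1 h, ?_⟩, fun ⟨hj, hlt⟩ => ⟨hlen.2 hj, ?_⟩⟩
    · rwa [hnext h (hlen.1 h), insertZeroAt_apply_succAbove, insertZeroAt_apply_succAbove,
        Fin.succ_lt_succ_iff] at hlt
    · rwa [hnext (hlen.2 hj) hj, insertZeroAt_apply_succAbove, insertZeroAt_apply_succAbove,
        Fin.succ_lt_succ_iff]

lemma forall_mem_cdesSet_iff {n : ℕ} {σ : Perm (Fin n)} {P : ℕ → Prop} :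
    (∀ a ∈ cdesSet n σ, P a) ↔ ∀ i, isCDesB σ i = true → P (σ i + 1) := by
  simp [cdesSet]

lemma forall_mem_cdesSet_insertZeroAt {n : ℕ} (p : Fin (n + 1)) (σ : Perm (Fin n))
    (P : ℕ → Prop) :
    (∀ a ∈ cdesSet (n + 1) (insertZeroAt p σ), P a) ↔
      (∀ a ∈ cdesSet n σ, P (a + 1)) ∧ ∀ j : Fin n, p = j.succ → P (σ j + 2) := by
  simp only [forall_mem_cdesSet_iff, Fin.forall_iff_succAbove p, isCDesB_insertZeroAt_self,
    isCDesB_insertZeroAt_succAbove, insertZeroAt_apply_succAbove, Fin.val_succ, or_imp,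
    forall_and, Bool.false_eq_true, false_imp_iff, true_and]
  exact and_comm

lemma card_filter_forall_succ_imp {n : ℕ} (σ : Perm (Fin n)) (P : ℕ → Prop)
    [DecidablePred P] :
    #{p : Fin (n + 1) | ∀ j : Fin n, p = j.succ → P (σ j + 2)} =
      1 + #{w ∈ Ioc 1 (n + 1) | P w} := by
  rw [Fin.card_filter_univ_succ']
  simp only [(Fin.succ_ne_zero _).symm, Fin.succ_inj, forall_eq', false_imp_iff, implies_true,
    if_true]
  congr 1
  rw [card_equiv σ (t := ({v | P (v + 2)} : Finset (Fin n))) (by simp)]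
  refine card_bij (fun v _ => (v : ℕ) + 2) (fun v hv => by simpa using hv)
    (fun a _ b _ h => Fin.ext (by simpa using h)) (fun w hw => ?_)
  simp only [mem_filter, mem_Ioc] at hw
  exact ⟨⟨w - 2, by omega⟩, by simpa [Nat.sub_add_cancel (by omega : 2 ≤ w)] using hw.2,
    by simp; omega⟩

theorem card_forall_mem_cdesSet_succ (n : ℕ) (P : ℕ → Prop) [DecidablePred P] :
    #{π : Perm (Fin (n + 1)) | ∀ a ∈ cdesSet (n + 1) π, P a} =
      (1 + #{w ∈ Ioc 1 (n + 1) | P w}) *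
        #{σ : Perm (Fin n) | ∀ a ∈ cdesSet n σ, P (a + 1)} := by
  have hequiv : #{π : Perm (Fin (n + 1)) | ∀ a ∈ cdesSet (n + 1) π, P a} =
      #{x : Fin (n + 1) × Perm (Fin n) | ∀ a ∈ cdesSet (n + 1) (insertZeroAt x.1 x.2), P a} :=
    (card_equiv insertZeroAtEquiv (by simp [insertZeroAtEquiv])).symm
  rw [hequiv, card_filter, Fintype.sum_prod_type_right]
  simp only [forall_mem_cdesSet_insertZeroAt, ite_and, sum_ite_irrel, sum_boole,
    card_filter_forall_succ_imp, sum_const_zero, Nat.cast_id]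
  rw [← sum_filter, sum_const, smul_eq_mul, mul_comm]

theorem card_forall_mem_cdesSet (n : ℕ) (P : ℕ → Prop) [DecidablePred P] :
    #{σ : Perm (Fin n) | ∀ a ∈ cdesSet n σ, P a} =
      ∏ m ∈ Ico 1 (n + 1), (1 + #{w ∈ Ioc m n | P w}) := by
  induction n generalizing P with
  | zero => simp [cdesSet]
  | succ n ih =>
    rw [card_forall_mem_cdesSet_succ, ih, prod_eq_prod_Ico_succ_bot (show 1 < n + 1 + 1 by omega),
      ← prod_Ico_add' _ 1 (n + 1) 1]
    congr 1
    refine prod_congr rfl fun m _ => ?_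
    rw [← map_add_right_Ioc, filter_map, card_map]
    rfl

theorem card_cdesSet_subset_eq_sum_cdes (n : ℕ) (T : Finset ℕ) :
    #{σ : Perm (Fin n) | cdesSet n σ ⊆ T} = ∑ U ∈ T.powerset, cdes n U := by
  rw [card_eq_sum_card_fiberwise (f := cdesSet n) (t := T.powerset)
    fun σ hσ => mem_powerset.2 (mem_filter.1 hσ).2]
  refine sum_congr rfl fun U hU => ?_
  rw [cdes, filter_filter]
  congr 1
  exact filter_congr fun σ _ => and_iff_right_of_imp fun h => h ▸ mem_powerset.1 hU

theorem cdes_eq_sum_powerset (n : ℕ) (S : Finset ℕ) :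
    (cdes n S : ℤ) =
      ∑ T ∈ S.powerset,
        (-1) ^ #(S \ T) * (#{σ : Perm (Fin n) | cdesSet n σ ⊆ T} : ℤ) := by
  simp only [card_cdesSet_subset_eq_sum_cdes, Nat.cast_sum]
  exact (sum_powerset_neg_one_pow_card_sdiff_mul_sum_powerset S fun U => (cdes n U : ℤ)).symm

/-- The sequence `s` extended by `s k = 1`; with this convention the exponents of the theorem are
uniformly `d i = s i - s (i + 1)`. -/
def padOne {k : ℕ} (s : Fin k → ℕ) (i : ℕ) : ℕ :=
  if h : i < k then s ⟨i, h⟩ else 1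

section padOne

variable {k : ℕ} {s : Fin k → ℕ}

@[simp]
lemma padOne_val (i : Fin k) : padOne s i = s i := by
  simp [padOne]

lemma padOne_of_le {i : ℕ} (hi : k ≤ i) : padOne s i = 1 := by
  simp [padOne, not_lt.2 hi]

lemma antitone_padOne (hs : StrictAnti s) (hpos : ∀ i, 1 ≤ s i) : Antitone (padOne s) := by
  refine antitone_nat_of_succ_le fun i => ?_
  simp only [padOne]
  split_ifs
  · exact (hs (Fin.mk_lt_mk.2 (Nat.lt_succ_self i))).le
  · omega
  · exact hpos _
  · rfl

lemma filter_lt_eq_Iic_of_mem_Ico (hs : StrictAnti s) (hpos : ∀ i, 1 ≤ s i) (i : Fin k)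
    {m : ℕ} (hm : m ∈ Ico (padOne s (i + 1)) (padOne s i)) :
    ({j | m < s j} : Finset (Fin k)) = Iic i := by
  rw [mem_Ico, padOne_val] at hm
  ext j
  simp only [mem_filter, mem_univ, true_and, mem_Iic]
  refine ⟨fun hj => ?_, fun hji => hm.2.trans_le (hs.antitone hji)⟩
  by_contra hij
  have := antitone_padOne hs hpos (show (i : ℕ) + 1 ≤ j from not_le.1 hij)
  rw [padOne_val] at this
  omega

theorem prod_Ico_one_add_sum_eq_prod_pow {n : ℕ} (hs : StrictAnti s)
    (hrange : ∀ i, s i ∈ Icc 1 n) (w : Fin k → ℕ) :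
    ∏ m ∈ Ico 1 (n + 1), (1 + ∑ j with m < s j, w j) =
      ∏ i : Fin k, (1 + ∑ j ∈ Iic i, w j) ^ (padOne s i - padOne s (i + 1)) := by
  have hpos i := (mem_Icc.1 (hrange i)).1
  have hg := antitone_padOne hs hpos
  have hg0 : 1 ≤ padOne s 0 ∧ padOne s 0 ≤ n + 1 := by
    simp only [padOne]
    split_ifs
    · have := mem_Icc.1 (hrange ⟨0, ‹_›⟩); omega
    · omega
  have htop : ∀ m ∈ Ico (padOne s 0) (n + 1), 1 + ∑ j with m < s j, w j = 1 := fun m hm => by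
    rw [filter_false_of_mem fun j _ => ?_, sum_empty, add_zero]
    rw [not_lt, ← padOne_val (s := s)]
    exact (hg (Nat.zero_le _)).trans (mem_Ico.1 hm).1
  calc ∏ m ∈ Ico 1 (n + 1), (1 + ∑ j with m < s j, w j)
      = ∏ m ∈ Ico (padOne s k) (padOne s 0), (1 + ∑ j with m < s j, w j) := by
        rw [← prod_Ico_consecutive _ hg0.1 hg0.2, prod_eq_one htop, mul_one, padOne_of_le le_rfl]
    _ = ∏ i ∈ range k,
          ∏ m ∈ Ico (padOne s (i + 1)) (padOne s i), (1 + ∑ j with m < s j, w j) :=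
        (prod_range_prod_Ico_of_antitone _ hg k).symm
    _ = ∏ i : Fin k,
          ∏ m ∈ Ico (padOne s (i + 1)) (padOne s i), (1 + ∑ j with m < s j, w j) :=
        (Fin.prod_univ_eq_prod_range _ k).symm
    _ = _ := prod_congr rfl fun i _ => by
        rw [prod_congr rfl fun m hm => by rw [filter_lt_eq_Iic_of_mem_Ico hs hpos i hm],
          prod_const, Nat.card_Ico]

end padOne

theorem card_cdesSet_subset_image {n k : ℕ} {s : Fin k → ℕ} (hs : StrictAnti s)
    (hrange : ∀ i, s i ∈ Icc 1 n) (x : Fin k → Fin 2) :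
    #{σ : Perm (Fin n) | cdesSet n σ ⊆ ({j | x j = 1} : Finset (Fin k)).image s} =
      ∏ i : Fin k, (1 + ∑ j ∈ Iic i, (x j : ℕ)) ^ (padOne s i - padOne s (i + 1)) := by
  set T := ({j | x j = 1} : Finset (Fin k)).image s
  have hcount : ∀ m, #{w ∈ Ioc m n | w ∈ T} = ∑ j with m < s j, (x j : ℕ) := fun m => by
    have : ({w ∈ Ioc m n | w ∈ T} : Finset ℕ) =
        ({j | m < s j ∧ x j = 1} : Finset (Fin k)).image s := by
      ext w
      simp only [T, mem_filter, mem_Ioc, mem_image, mem_univ, true_and]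
      constructor
      · rintro ⟨⟨hmw, -⟩, j, hj, rfl⟩
        exact ⟨j, ⟨hmw, hj⟩, rfl⟩
      · rintro ⟨j, ⟨hmj, hj⟩, rfl⟩
        exact ⟨⟨hmj, (mem_Icc.1 (hrange j)).2⟩, j, hj, rfl⟩
    simp_rw [this, card_image_of_injective _ hs.injective, Fin.val_eq_ite_eq_one, sum_boole,
      filter_filter, Nat.cast_id]
  calc #{σ : Perm (Fin n) | cdesSet n σ ⊆ T}
      = #{σ : Perm (Fin n) | ∀ a ∈ cdesSet n σ, a ∈ T} := by simp only [subset_iff]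
    _ = ∏ m ∈ Ico 1 (n + 1), (1 + ∑ j with m < s j, (x j : ℕ)) := by
        rw [card_forall_mem_cdesSet]
        simp_rw [hcount]
    _ = _ := prod_Ico_one_add_sum_eq_prod_pow hs hrange _

theorem stmt_8_general (n k : ℕ)
    (s : Fin k → ℕ) (hs : StrictAnti s)
    (S : Finset ℕ) (hS : S = Finset.image s Finset.univ)
    (hrange : ∀ i, s i ∈ Finset.Icc 2 n)
    (d : Fin k → ℕ)
    (hd : ∀ i : Fin k, d i = if h : (i : ℕ) + 1 < k then s i - s ⟨(i : ℕ) + 1, h⟩ else s i - 1) :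
    (cdes n S : ℤ) =
      ∑ x : Fin k → Fin 2,
        (-1 : ℤ) ^ (k - ∑ j, (x j : ℕ)) *
          ∏ i : Fin k, ((1 : ℤ) + ∑ j ∈ Finset.Iic i, (x j : ℕ)) ^ (d i) := by
  have hrange' : ∀ i, s i ∈ Icc 1 n := fun i => Icc_subset_Icc_left one_le_two (hrange i)
  have hd' : ∀ i : Fin k, d i = padOne s i - padOne s (i + 1) := fun i => by
    rw [hd, padOne_val]
    simp only [padOne]
    split_ifs <;> rfl
  rw [cdes_eq_sum_powerset, hS, sum_powerset_image_eq_sum_fun_fin_two hs.injective]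
  refine sum_congr rfl fun x _ => ?_
  have hcard : #(({j | x j = 1} : Finset (Fin k)).image s) = ∑ j, (x j : ℕ) := by
    simp_rw [card_image_of_injective _ hs.injective, Fin.val_eq_ite_eq_one, sum_boole, Nat.cast_id]
  rw [card_sdiff_of_subset (image_subset_image (filter_subset _ _)), hcard,
    card_image_of_injective _ hs.injective, card_univ, Fintype.card_fin,
    card_cdesSet_subset_image hs hrange' x]
  simp only [hd']
  push_cast
  rfl

theorem stmt_8 (n k : ℕ) (hn : 2 ≤ n) (hk : 1 ≤ k)
    (s : Fin k → ℕ) (hs : StrictAnti s)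
    (S : Finset ℕ) (hS : S = Finset.image s Finset.univ)
    (hrange : ∀ i, s i ∈ Finset.Icc 2 n)
    (d : Fin k → ℕ)
    (hd : ∀ i : Fin k, d i = if h : (i : ℕ) + 1 < k then s i - s ⟨(i : ℕ) + 1, h⟩ else s i - 1) :
    (cdes n S : ℤ) =
      ∑ x : Fin k → Fin 2,
        (-1 : ℤ) ^ (k - ∑ j, (x j : ℕ)) *
          ∏ i : Fin k, ((1 : ℤ) + ∑ j ∈ Finset.Iic i, (x j : ℕ)) ^ (d i) :=
  stmt_8_general n k s hs S hS hrange d hd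
end

section
/- For n ≥ 2 and S ⊆ [2,n], cdes_n(S) > 0 if S is nonempty and contained in [2,n]; moreover if 1 ∈ S then cdes_n(S) = 0. -/
/-
Write the elements of `S` in decreasing order, followed by the rest of `[n]` in increasing order.
Every element of `S` is then followed by a smaller one (the least of them by `1`, which starts the
second block because `1 ∉ S`), while the second block has no descents; so the circular descent set
is exactly `S`. Conversely `1`, being the least value, is never followed by a smaller one.
-/

open Finset

lemma Finset.card_add_card_compl_fin {n : ℕ} (T : Finset (Fin n)) : #T + #Tᶜ = n :=
  (card_add_card_compl T).trans (Fintype.card_fin n)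

namespace Equiv.Perm

variable {n : ℕ}

/-- The permutation whose one-line notation lists `T` in decreasing order, then `Tᶜ` in
increasing order. -/
def revSortedAppendSorted (T : Finset (Fin n)) : Equiv.Perm (Fin n) :=
  (finCongr (card_add_card_compl_fin T).symm).trans <| finSumFinEquiv.symm.trans <|
    (Equiv.sumCongr Fin.revPerm (Equiv.refl _)).trans (finSumEquivOfFinset rfl rfl)

lemma revSortedAppendSorted_apply_of_lt (T : Finset (Fin n)) (i : Fin n) (hi : (i : ℕ) < #T) :
    revSortedAppendSorted T i = T.orderEmbOfFin rfl (Fin.rev ⟨i, hi⟩) := by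
  have : finCongr (card_add_card_compl_fin T).symm i = Fin.castAdd _ ⟨i, hi⟩ := rfl
  simp only [revSortedAppendSorted, Equiv.trans_apply, this, finSumFinEquiv_symm_apply_castAdd,
    Equiv.sumCongr_apply, Sum.map_inl, Fin.revPerm_apply, finSumEquivOfFinset_inl]

lemma revSortedAppendSorted_apply_of_le (T : Finset (Fin n)) (i : Fin n) (hi : #T ≤ (i : ℕ)) :
    revSortedAppendSorted T i =
      Tᶜ.orderEmbOfFin rfl ⟨i - #T, by have := card_add_card_compl_fin T; omega⟩ := by
  have : finCongr (card_add_card_compl_fin T).symm i =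
      Fin.natAdd _ ⟨i - #T, by have := card_add_card_compl_fin T; omega⟩ :=
    Fin.ext (by simp only [finCongr_apply, Fin.val_cast, Fin.val_natAdd]; omega)
  rw [revSortedAppendSorted, Equiv.trans_apply, this, Equiv.trans_apply,
    finSumFinEquiv_symm_apply_natAdd]
  rfl

lemma revSortedAppendSorted_mem_iff (T : Finset (Fin n)) (i : Fin n) :
    revSortedAppendSorted T i ∈ T ↔ (i : ℕ) < #T := by
  refine ⟨fun hmem => ?_, fun hi => ?_⟩
  · by_contra! hi
    rw [revSortedAppendSorted_apply_of_le T i hi] at hmem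
    exact mem_compl.mp (orderEmbOfFin_mem _ _ _) hmem
  · rw [revSortedAppendSorted_apply_of_lt T i hi]
    exact orderEmbOfFin_mem _ _ _

lemma strictAntiOn_revSortedAppendSorted (T : Finset (Fin n)) :
    StrictAntiOn (revSortedAppendSorted T) {i | (i : ℕ) < #T} := by
  intro i hi j hj hij
  rw [revSortedAppendSorted_apply_of_lt T i hi, revSortedAppendSorted_apply_of_lt T j hj]
  exact (T.orderEmbOfFin rfl).strictMono (Fin.rev_lt_rev.mpr hij)

lemma strictMonoOn_revSortedAppendSorted (T : Finset (Fin n)) :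
    StrictMonoOn (revSortedAppendSorted T) {i | #T ≤ (i : ℕ)} := by
  intro i hi j hj hij
  rw [revSortedAppendSorted_apply_of_le T i hi, revSortedAppendSorted_apply_of_le T j hj]
  exact (Tᶜ.orderEmbOfFin rfl).strictMono (Fin.mk_lt_mk.mpr (Nat.sub_lt_sub_right hi hij))

end Equiv.Perm

section CircularDescents

variable {n : ℕ}

lemma isCDesB_eq_true_iff {σ : Equiv.Perm (Fin n)} {i : Fin n} :
    isCDesB σ i = true ↔ ∃ h : (i : ℕ) + 1 < n, σ ⟨i + 1, h⟩ < σ i := by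
  unfold isCDesB
  split_ifs with h <;> simp [h]

lemma mem_cdesSet_iff {σ : Equiv.Perm (Fin n)} {v : ℕ} :
    v ∈ cdesSet n σ ↔ ∃ i, isCDesB σ i = true ∧ (σ i : ℕ) + 1 = v := by
  simp [cdesSet]

lemma one_notMem_cdesSet (σ : Equiv.Perm (Fin n)) : 1 ∉ cdesSet n σ := by
  simp only [mem_cdesSet_iff, isCDesB_eq_true_iff, Nat.add_eq_right, not_exists, not_and]
  intro i ⟨h, hlt⟩ hi
  exact Nat.not_lt_zero _ (hi ▸ Fin.lt_def.mp hlt)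

lemma isCDesB_iff_lt_of_strictAntiOn_of_strictMonoOn {σ : Equiv.Perm (Fin n)}
    {T : Finset (Fin n)} {k : ℕ} (hT : ∀ i, σ i ∈ T ↔ (i : ℕ) < k)
    (hanti : StrictAntiOn σ {i | (i : ℕ) < k}) (hmono : StrictMonoOn σ {i | k ≤ (i : ℕ)})
    (h0 : ∀ t ∈ T, (t : ℕ) ≠ 0) (i : Fin n) :
    isCDesB σ i = true ↔ (i : ℕ) < k := by
  rw [isCDesB_eq_true_iff]
  constructor
  · rintro ⟨h, hlt⟩
    by_contra! hki
    exact (hmono hki (show k ≤ (i : ℕ) + 1 by omega) (Fin.lt_def.mpr (by simp))).asymm hlt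
  · intro hik
    -- the value `0 ∉ T` sits at a position `p ≥ k`, where `σ` takes its least value on `Tᶜ`
    set p := σ.symm ⟨0, by omega⟩
    have hp : k ≤ (p : ℕ) := by
      by_contra! hp
      exact h0 _ ((hT p).mpr hp) (by simp [p])
    have h : (i : ℕ) + 1 < n := by omega
    refine ⟨h, ?_⟩
    rcases Nat.lt_or_ge ((i : ℕ) + 1) k with hik' | hki
    · exact hanti hik hik' (Fin.lt_def.mpr (by simp))
    · have hle : σ ⟨i + 1, h⟩ ≤ σ p :=
        hmono.monotoneOn (show k ≤ (i : ℕ) + 1 from hki) hp (Fin.le_def.mpr (by dsimp only; omega))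
      have hpos := h0 _ ((hT i).mpr hik)
      simp only [p, Equiv.apply_symm_apply, Fin.le_def] at hle
      exact Fin.lt_def.mpr (by omega)

lemma cdesSet_eq_image_of_strictAntiOn_of_strictMonoOn {σ : Equiv.Perm (Fin n)}
    {T : Finset (Fin n)} {k : ℕ} (hT : ∀ i, σ i ∈ T ↔ (i : ℕ) < k)
    (hanti : StrictAntiOn σ {i | (i : ℕ) < k}) (hmono : StrictMonoOn σ {i | k ≤ (i : ℕ)})
    (h0 : ∀ t ∈ T, (t : ℕ) ≠ 0) :
    cdesSet n σ = T.image (fun t : Fin n => (t : ℕ) + 1) := by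
  ext v
  simp only [mem_cdesSet_iff, isCDesB_iff_lt_of_strictAntiOn_of_strictMonoOn hT hanti hmono h0,
    mem_image]
  constructor
  · rintro ⟨i, hi, rfl⟩
    exact ⟨σ i, (hT i).mpr hi, rfl⟩
  · rintro ⟨t, ht, rfl⟩
    exact ⟨σ.symm t, (hT _).mp (by simpa using ht), by simp⟩

theorem exists_cdesSet_eq_image (T : Finset (Fin n)) (h0 : ∀ t ∈ T, (t : ℕ) ≠ 0) :
    ∃ σ : Equiv.Perm (Fin n), cdesSet n σ = T.image (fun t : Fin n => (t : ℕ) + 1) :=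
  ⟨_, cdesSet_eq_image_of_strictAntiOn_of_strictMonoOn
    (Equiv.Perm.revSortedAppendSorted_mem_iff T)
    (Equiv.Perm.strictAntiOn_revSortedAppendSorted T)
    (Equiv.Perm.strictMonoOn_revSortedAppendSorted T) h0⟩

theorem exists_cdesSet_eq {S : Finset ℕ} (hS : S ⊆ Icc 2 n) :
    ∃ σ : Equiv.Perm (Fin n), cdesSet n σ = S := by
  have hS' : ∀ v ∈ S, 2 ≤ v ∧ v ≤ n := fun v hv => mem_Icc.mp (hS hv)
  obtain ⟨σ, hσ⟩ := exists_cdesSet_eq_image ({t : Fin n | (t : ℕ) + 1 ∈ S} : Finset (Fin n))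
    (fun t ht => by have := hS' _ (mem_filter.mp ht).2; omega)
  refine ⟨σ, hσ.trans ?_⟩
  ext v
  simp only [mem_image, mem_filter, mem_univ, true_and]
  constructor
  · rintro ⟨t, ht, rfl⟩
    exact ht
  · intro hv
    have := hS' v hv
    exact ⟨⟨v - 1, by omega⟩, by simpa [Nat.sub_add_cancel (by omega : 1 ≤ v)], Nat.sub_add_cancel (by omega)⟩

lemma cdes_pos_iff {S : Finset ℕ} : 0 < cdes n S ↔ ∃ σ : Equiv.Perm (Fin n), cdesSet n σ = S := by
  simp [cdes, card_pos, filter_nonempty_iff]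

lemma cdes_eq_zero_of_one_mem {S : Finset ℕ} (h1 : 1 ∈ S) : cdes n S = 0 := by
  rw [← Nat.le_zero, ← not_lt, cdes_pos_iff]
  rintro ⟨σ, rfl⟩
  exact one_notMem_cdesSet σ h1

end CircularDescents

theorem stmt_10_general (n : ℕ) (S : Finset ℕ) :
    (S.Nonempty → S ⊆ Finset.Icc 2 n → 0 < cdes n S) ∧ (1 ∈ S → cdes n S = 0) :=
  ⟨fun _ hS => cdes_pos_iff.mpr (exists_cdesSet_eq hS), cdes_eq_zero_of_one_mem⟩

theorem stmt_10 (n : ℕ) (hn : 2 ≤ n) (S : Finset ℕ) :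
    (S.Nonempty → S ⊆ Finset.Icc 2 n → 0 < cdes n S) ∧ (1 ∈ S → cdes n S = 0) :=
  stmt_10_general n S
end
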